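/- arXiv:2601.17285 — 2 statements merged into one kernel-verified Lean document; each statement's English description precedes it below -/
import Mathlib

section
/- For any two vertices u, v of a finite connected graph G, u and v are 2-edge-connected in G if and only if for every spanning tree T of G, every tree edge on the tree path between u and v in T has at least one replacement edge. -/
/-! If `u, v` are 2-edge-connected and `e` lies on the tree path, then `u, v` are separated in
`T - e` (paths in a tree are unique) but joined in `G - e`, so a `u`–`v` walk in `G - e` crosses
between the two sides of `T - e` along an edge, which cannot be a tree edge. Conversely, take any
spanning tree `T`: if `e = s(a, b)` is off the tree path, that path survives in `G - e`; otherwise a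
replacement edge joins two components of `T - e`, and these are the components of `a` and `b`, so
`e` is not a bridge of `G` and `G - e` stays connected. -/

namespace SimpleGraph

variable {V : Type*} {G H T : SimpleGraph V}

lemma Reachable.exists_adj_not_reachable {K : SimpleGraph V} {u v : V} (huv : H.Reachable u v)
    (hK : ¬ K.Reachable u v) : ∃ x y, H.Adj x y ∧ ¬ K.Reachable x y := by
  obtain ⟨p⟩ := huv
  obtain ⟨d, -, hx, hy⟩ := p.exists_boundary_dart {w | K.Reachable u w} (Reachable.refl u) hK
  exact ⟨d.fst, d.snd, d.adj, fun h ↦ hy (Reachable.trans hx h)⟩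

lemma Walk.reachable_deleteEdges_or {a b w : V} (p : H.Walk w a) :
    (H.deleteEdges {s(a, b)}).Reachable w a ∨ (H.deleteEdges {s(a, b)}).Reachable w b := by
  induction p with
  | nil => exact .inl .rfl
  | @cons w c a hwc q ih =>
    by_cases he : s(w, c) = s(a, b)
    · rcases Sym2.eq_iff.mp he with ⟨rfl, -⟩ | ⟨rfl, -⟩
      exacts [.inl .rfl, .inr .rfl]
    · have hwc' : (H.deleteEdges {s(a, b)}).Adj w c := deleteEdges_adj.mpr ⟨hwc, he⟩
      exact ih.imp hwc'.reachable.trans hwc'.reachable.trans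

lemma Preconnected.reachable_deleteEdges_of_adj_not_reachable (hT : T.Preconnected) (hTG : T ≤ G)
    {a b x y : V} (hxy : (G.deleteEdges {s(a, b)}).Adj x y)
    (hnr : ¬ (T.deleteEdges {s(a, b)}).Reachable x y) :
    (G.deleteEdges {s(a, b)}).Reachable a b := by
  obtain ⟨px⟩ := hT x a
  obtain ⟨py⟩ := hT y a
  have push := fun {c d : V} (h : (T.deleteEdges {s(a, b)}).Reachable c d) ↦
    h.mono (deleteEdges_mono (s := {s(a, b)}) hTG)
  rcases px.reachable_deleteEdges_or (b := b) with hx | hx <;>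
    rcases py.reachable_deleteEdges_or (b := b) with hy | hy
  · exact absurd (hx.trans hy.symm) hnr
  · exact (push hx).symm.trans (hxy.reachable.trans (push hy))
  · exact (push hy).symm.trans (hxy.reachable.symm.trans (push hx))
  · exact absurd (hx.trans hy.symm) hnr

lemma IsAcyclic.not_reachable_deleteEdges_of_mem_edges (hT : T.IsAcyclic) {u v : V}
    {p : T.Walk u v} (hp : p.IsPath) {e : Sym2 V} (he : e ∈ p.edges) :
    ¬ (T.deleteEdges {e}).Reachable u v := by
  classical
  rintro ⟨q⟩
  let q' : T.Walk u v := q.mapLe (deleteEdges_le _)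
  have hpath : (q'.toPath : T.Walk u v) = p :=
    congrArg Subtype.val ((hT.subsingleton_path u v).elim _ ⟨p, hp⟩)
  have heq : e ∈ q.edges := by
    rw [← Walk.edges_mapLe_eq_edges (deleteEdges_le _)]
    exact q'.edges_toPath_subset_edges (hpath ▸ he)
  simpa using q.edges_subset_edgeSet heq

end SimpleGraph

open SimpleGraph

theorem stmt16_general {V : Type*} (G : SimpleGraph V) (hG : G.Connected)
    (u v : V) :
    (∀ e ∈ G.edgeSet, (G.deleteEdges {e}).Reachable u v) ↔
      ∀ T : SimpleGraph V, T ≤ G → T.IsTree →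
        ∀ p : T.Walk u v, p.IsPath →
          ∀ a b : V, T.Adj a b → s(a, b) ∈ p.edges →
            ∃ x y : V, G.Adj x y ∧ ¬ T.Adj x y ∧
              ¬ (T.deleteEdges {s(a, b)}).Reachable x y := by
  constructor
  · intro h T hTG hT p hp a b hab he
    obtain ⟨x, y, hxy, hnr⟩ := (h s(a, b) (hTG hab)).exists_adj_not_reachable
      (hT.isAcyclic.not_reachable_deleteEdges_of_mem_edges hp he)
    rw [deleteEdges_adj] at hxy
    exact ⟨x, y, hxy.1, fun hTxy ↦ hnr (deleteEdges_adj.mpr ⟨hTxy, hxy.2⟩).reachable, hnr⟩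
  · rintro h ⟨a, b⟩ -
    obtain ⟨T, hTG, hT⟩ := hG.exists_isTree_le
    obtain ⟨p, hp⟩ := hT.connected.exists_isPath u v
    by_cases hep : s(a, b) ∈ p.edges
    · obtain ⟨x, y, hxy, hnT, hnr⟩ := h T hTG hT p hp a b (p.adj_of_mem_edges hep) hep
      have hxy' : (G.deleteEdges {s(a, b)}).Adj x y := by
        refine deleteEdges_adj.mpr ⟨hxy, fun he ↦ hnT ?_⟩
        rw [← mem_edgeSet, Set.mem_singleton_iff.mp he]
        exact p.edges_subset_edgeSet hep
      have hab : (G.deleteEdges {s(a, b)}).Reachable a b :=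
        hT.connected.preconnected.reachable_deleteEdges_of_adj_not_reachable hTG hxy' hnr
      exact (hG.connected_delete_edge_of_not_isBridge (not_not_intro hab)).preconnected u v
    · exact reachable_deleteEdges_iff_exists_walk.mpr ⟨p.mapLe hTG, by simpa using hep⟩

/-- Two vertices `u, v` of a finite connected graph `G` are 2-edge-connected
(no single edge deletion disconnects them) iff for every spanning tree `T` of
`G`, every tree edge on the tree path between `u` and `v` in `T` has at least
one replacement edge. -/
theorem stmt16 {V : Type*} [Fintype V] (G : SimpleGraph V) (hG : G.Connected)
    (u v : V) :
    (∀ e ∈ G.edgeSet, (G.deleteEdges {e}).Reachable u v) ↔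
      ∀ T : SimpleGraph V, T ≤ G → T.IsTree →
        ∀ p : T.Walk u v, p.IsPath →
          ∀ a b : V, T.Adj a b → s(a, b) ∈ p.edges →
            ∃ x y : V, G.Adj x y ∧ ¬ T.Adj x y ∧
              ¬ (T.deleteEdges {s(a, b)}).Reachable x y :=
  stmt16_general G hG u v
end

section
/- Path compression preserves the root: if p : V → V is a parent function with no nontrivial cycles and we replace p(u) by root(u) for some vertex u, the resulting parent function p' still has no nontrivial cycles and root_{p'}(v) = root_p(v) for every vertex v. -/
private lemma stmt18_ge {V : Type*} (p : V → V) (r : V → V)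
    (hfix : ∀ v, p (r v) = r v) {v : V} {n : ℕ} (h : p^[n] v = r v)
    {N : ℕ} (hN : n ≤ N) : p^[N] v = r v := by
  have : N = (N - n) + n := by omega
  rw [this, Function.iterate_add_apply, h, Function.iterate_fixed (hfix v)]

private lemma stmt18_avoid {V : Type*} [DecidableEq V] (p : V → V) (u w : V)
    (v : V) (k : ℕ) (h : ∀ i < k, p^[i] v ≠ u) :
    (Function.update p u w)^[k] v = p^[k] v := by
  induction k with
  | zero => rfl
  | succ k ih =>
    rw [Function.iterate_succ_apply', Function.iterate_succ_apply',
      ih (fun i hi => h i (Nat.lt_succ_of_lt hi)),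
      Function.update_of_ne (h k (Nat.lt_succ_self k))]

/-- Path compression preserves the root: if `p : V → V` is a parent function
with no nontrivial cycles (iteration from every vertex reaches its root `r v`)
and we replace `p(u)` by `root(u)`, the resulting parent function still has no
nontrivial cycles and every vertex keeps the same root. -/
theorem stmt18 {V : Type*} [Fintype V] [DecidableEq V] (p : V → V) (r : V → V)
    (hfix : ∀ v, p (r v) = r v) (hreach : ∀ v, ∃ n, p^[n] v = r v)
    (u : V) :
    (∀ v, Function.update p u (r u) (r v) = r v) ∧
      (∀ v, ∃ n, (Function.update p u (r u))^[n] v = r v) := by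
  have hru : r u = u → r u = u := fun h => h
  constructor
  · intro v
    by_cases h : r v = u
    · obtain ⟨m, hm⟩ := hreach u
      have hpu : p u = u := h ▸ hfix v
      have : r u = u := by rw [← hm, Function.iterate_fixed hpu]
      rw [h, Function.update_self, this, ← h]
    · rw [Function.update_of_ne h, hfix]
  · intro v
    obtain ⟨n, hn⟩ := hreach v
    obtain ⟨m, hm⟩ := hreach u
    by_cases h : ∃ k, p^[k] v = u
    · set k := Nat.find h with hk
      have hku : p^[k] v = u := Nat.find_spec h
      have hmin : ∀ i < k, p^[i] v ≠ u := fun i hi => Nat.find_min h hi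
      -- r u = r v
      have hN1 : p^[n + k + m] v = r v := stmt18_ge p r hfix hn (by omega)
      have hN2 : p^[n + k + m] v = r u := by
        have : n + k + m = (n + m) + k := by omega
        rw [this, Function.iterate_add_apply, hku]
        exact stmt18_ge p r hfix hm (by omega)
      have hrur : r u = r v := by rw [← hN1, hN2]
      refine ⟨k + 1, ?_⟩
      rw [Function.iterate_succ_apply', stmt18_avoid p u (r u) v k hmin, hku,
        Function.update_self, hrur]
    · push_neg at h
      exact ⟨n, by rw [stmt18_avoid p u (r u) v n (fun i _ => h i), hn]⟩
end
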